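/- arXiv:1801.02812 — 3 statements merged into one kernel-verified Lean document; each statement's English description precedes it below -/
import Mathlib

section
/- The Gromov–Hausdorff distance between finite metric spaces M and N equals the Gromov–Hausdorff distance between their Vietoris–Rips filtered simplicial complexes: d_GH(M,N) = d_GH(VR(M), VR(N)). -/
open Finset Function

noncomputable section
open scoped Classical

variable {V W U : Type} [Fintype V] [Fintype W] [Fintype U]

/-- A size function is monotone on nonempty subsets. -/
def Monot (D : Finset V → ℝ) : Prop :=
  ∀ ⦃α β : Finset V⦄, α.Nonempty → α ⊆ β → D α ≤ D β

/-- `max 0 (sup over nonempty subsets of the vertex set of g)`. -/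
def supSub (g : Finset V → ℝ) : ℝ :=
  ((Finset.univ : Finset V).powerset.filter Finset.Nonempty).fold max 0 g

/-- Degree of a morphism: least `r ≥ 0` with `D_Y (f α) ≤ D_X α + r` for all nonempty `α`. -/
def degF (DX : Finset V → ℝ) (DY : Finset W → ℝ) (f : V → W) : ℝ :=
  supSub fun α => DY (α.image f) - DX α

/-- Codegree: least `r ≥ 0` with `D_Y (f α ∪ g α) ≤ D_X α + r` for all nonempty `α`. -/
def codegF (DX : Finset V → ℝ) (DY : Finset W → ℝ) (f g : V → W) : ℝ :=
  supSub fun α => DY (α.image f ∪ α.image g) - DX α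

/-- `codeg^∞`: minimum over chains `f = F 0, …, F n = g` of the max codegree of
consecutive terms. -/
def codegInfF (DX : Finset V → ℝ) (DY : Finset W → ℝ) (f g : V → W) : ℝ :=
  sInf { c : ℝ | ∃ n : ℕ, 0 < n ∧ ∃ F : ℕ → V → W, F 0 = f ∧ F n = g ∧
    c = (Finset.range n).fold max 0 fun i => codegF DX DY (F i) (F (i + 1)) }

/-- `(f, g)` is an `ε`-interleaving between the filtered complexes given by `DX`, `DY`. -/
def IsInterleaving (DX : Finset V → ℝ) (DY : Finset W → ℝ)
    (f : V → W) (g : W → V) (ε : ℝ) : Prop :=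
  degF DX DY f ≤ ε ∧ degF DY DX g ≤ ε ∧
  codegInfF DX DX (g ∘ f) id ≤ 2 * ε ∧ codegInfF DY DY (f ∘ g) id ≤ 2 * ε

/-- The interleaving distance between filtered simplicial complexes. -/
def dIF (DX : Finset V → ℝ) (DY : Finset W → ℝ) : ℝ :=
  sInf { ε : ℝ | 0 ≤ ε ∧ ∃ f g, IsInterleaving DX DY f g ε }

/-- The vertex quasi-distance `δ_X(v,w)`. -/
def vqd (D : Finset V → ℝ) (v w : V) : ℝ :=
  supSub fun α => D (insert w α) - D (insert v α)

/-- Distortion of a correspondence `R ⊆ V × W`, viewed as a tripod via the projections. -/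
def corDis (DX : Finset V → ℝ) (DY : Finset W → ℝ) (R : Finset (V × W)) : ℝ :=
  (R.powerset.filter Finset.Nonempty).fold max 0 fun α =>
    |DX (α.image Prod.fst) - DY (α.image Prod.snd)|

/-- Gromov–Hausdorff distance (via correspondences). -/
def dGHcor (DX : Finset V → ℝ) (DY : Finset W → ℝ) : ℝ :=
  (1 / 2) * sInf { c : ℝ | ∃ R : Finset (V × W),
    (∀ v : V, ∃ w, (v, w) ∈ R) ∧ (∀ w : W, ∃ v, (v, w) ∈ R) ∧ c = corDis DX DY R }

/-- Distortion of a tripod `(Z, p, q)`. -/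
def trdis (DX : Finset V → ℝ) (DY : Finset W → ℝ) {Z : Type} [Fintype Z]
    (p : Z → V) (q : Z → W) : ℝ :=
  supSub fun α : Finset Z => |DX (α.image p) - DY (α.image q)|

/-- Gromov–Hausdorff distance between filtered simplicial complexes (via tripods). -/
def dGHtri (DX : Finset V → ℝ) (DY : Finset W → ℝ) : ℝ :=
  (1 / 2) * sInf { c : ℝ | ∃ (Z : Type) (_i : Fintype Z) (p : Z → V) (q : Z → W),
    Surjective p ∧ Surjective q ∧ c = trdis DX DY p q }

/-- Diameter of a finite subset of a metric space. -/
def fdiam {M : Type} [MetricSpace M] (σ : Finset M) : ℝ :=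
  (σ ×ˢ σ).fold max 0 fun p => dist p.1 p.2

/-- Metric distortion of a correspondence between metric spaces. -/
def metDis {M N : Type} [MetricSpace M] [MetricSpace N] (R : Finset (M × N)) : ℝ :=
  (R ×ˢ R).fold max 0 fun p => |dist p.1.1 p.2.1 - dist p.1.2 p.2.2|

/-- Gromov–Hausdorff distance between finite metric spaces. -/
def dGHmet (M N : Type) [MetricSpace M] [MetricSpace N] : ℝ :=
  (1 / 2) * sInf { c : ℝ | ∃ R : Finset (M × N),
    (∀ x : M, ∃ y, (x, y) ∈ R) ∧ (∀ y : N, ∃ x, (x, y) ∈ R) ∧ c = metDis R }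

/-!
Every tripod `(Z, p, q)` induces the correspondence `{(p z, q z)}`, and every correspondence is a
tripod through its projections. For Vietoris–Rips filtrations both have the same distortion: the
diameter of `p(α)` is attained at some pair `p z, p z'`, and
`d(p z, p z') ≤ d(q z, q z') + dis ≤ diam q(α) + dis`; conversely, on the two-point simplex
`{z, z'}` the simplicial distortion is exactly `|d(p z, p z') - d(q z, q z')|`.
-/

lemma fold_max_zero_nonneg {α : Type*} (s : Finset α) (f : α → ℝ) : 0 ≤ s.fold max 0 f :=
  (le_fold_max _).mpr (Or.inl le_rfl)

section VietorisRips

variable {M N Z : Type} [MetricSpace M] [MetricSpace N]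

lemma dist_le_fdiam {σ : Finset M} {x y : M} (hx : x ∈ σ) (hy : y ∈ σ) :
    dist x y ≤ fdiam σ :=
  (le_fold_max _).mpr (Or.inr ⟨(x, y), mem_product.mpr ⟨hx, hy⟩, le_rfl⟩)

lemma fdiam_pair (a b : M) : fdiam ({a, b} : Finset M) = dist a b := by
  refine le_antisymm ((fold_max_le _).mpr ⟨dist_nonneg, ?_⟩)
    (dist_le_fdiam (by simp) (by simp))
  rintro ⟨x, y⟩ hxy
  simp only [mem_product, mem_insert, mem_singleton] at hxy
  obtain ⟨rfl | rfl, rfl | rfl⟩ := hxy <;> simp [dist_comm]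

lemma fdiam_image_le_add (p : Z → M) (q : Z → N) (α : Finset Z) {c : ℝ} (hc₀ : 0 ≤ c)
    (hc : ∀ z z', dist (p z) (p z') ≤ dist (q z) (q z') + c) :
    fdiam (α.image p) ≤ fdiam (α.image q) + c := by
  refine (fold_max_le _).mpr ⟨add_nonneg (fold_max_zero_nonneg _ _) hc₀, ?_⟩
  rintro ⟨x, y⟩ hxy
  obtain ⟨z, hz, rfl⟩ := mem_image.mp (mem_product.mp hxy).1
  obtain ⟨z', hz', rfl⟩ := mem_image.mp (mem_product.mp hxy).2
  exact (hc z z').trans (add_le_add_left (dist_le_fdiam (mem_image_of_mem q hz)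
    (mem_image_of_mem q hz')) c)

lemma abs_fdiam_image_sub_le (p : Z → M) (q : Z → N) (α : Finset Z) {c : ℝ} (hc₀ : 0 ≤ c)
    (hc : ∀ z z', |dist (p z) (p z') - dist (q z) (q z')| ≤ c) :
    |fdiam (α.image p) - fdiam (α.image q)| ≤ c := by
  rw [abs_sub_le_iff, sub_le_iff_le_add', sub_le_iff_le_add']
  refine ⟨fdiam_image_le_add p q α hc₀ fun z z' => ?_,
    fdiam_image_le_add q p α hc₀ fun z z' => ?_⟩
  · linarith [le_abs_self (dist (p z) (p z') - dist (q z) (q z')), hc z z']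
  · linarith [neg_abs_le (dist (p z) (p z') - dist (q z) (q z')), hc z z']

variable [Fintype Z]

lemma abs_dist_sub_dist_le_metDis (p : Z → M) (q : Z → N) (z z' : Z) :
    |dist (p z) (p z') - dist (q z) (q z')| ≤ metDis (univ.image fun z => (p z, q z)) :=
  (le_fold_max _).mpr (Or.inr ⟨((p z, q z), (p z', q z')),
    mem_product.mpr ⟨mem_image_of_mem _ (mem_univ z), mem_image_of_mem _ (mem_univ z')⟩, le_rfl⟩)

lemma trdis_fdiam_eq_metDis (p : Z → M) (q : Z → N) :
    trdis fdiam fdiam p q = metDis (univ.image fun z => (p z, q z)) := by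
  refine le_antisymm ((fold_max_le _).mpr ⟨fold_max_zero_nonneg _ _, fun α _ => ?_⟩)
    ((fold_max_le _).mpr ⟨fold_max_zero_nonneg _ _, ?_⟩)
  · exact abs_fdiam_image_sub_le p q α (fold_max_zero_nonneg _ _)
      (abs_dist_sub_dist_le_metDis p q)
  · rintro ⟨x, y⟩ hxy
    obtain ⟨z, -, rfl⟩ := mem_image.mp (mem_product.mp hxy).1
    obtain ⟨z', -, rfl⟩ := mem_image.mp (mem_product.mp hxy).2
    refine (le_fold_max _).mpr (Or.inr ⟨{z, z'}, by simp, ?_⟩)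
    simp only [image_insert, image_singleton, fdiam_pair, le_refl]

end VietorisRips

theorem stmt_2_general (M N : Type) [MetricSpace M] [MetricSpace N] [Fintype M] [Fintype N] :
    dGHmet M N = dGHtri (fdiam (M := M)) (fdiam (M := N)) := by
  unfold dGHmet dGHtri
  congr 2
  ext c
  constructor
  · rintro ⟨R, hM, hN, rfl⟩
    refine ⟨R, inferInstance, fun z => z.val.1, fun z => z.val.2, fun x => ?_, fun y => ?_, ?_⟩
    · obtain ⟨y, hy⟩ := hM x
      exact ⟨⟨(x, y), hy⟩, rfl⟩
    · obtain ⟨x, hx⟩ := hN y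
      exact ⟨⟨(x, y), hx⟩, rfl⟩
    · simp only [trdis_fdiam_eq_metDis, Prod.mk.eta, univ_eq_attach, attach_image_val]
  · rintro ⟨Z, _, p, q, hp, hq, rfl⟩
    refine ⟨univ.image fun z => (p z, q z), fun x => ?_, fun y => ?_,
      trdis_fdiam_eq_metDis p q⟩
    · obtain ⟨z, rfl⟩ := hp x
      exact ⟨q z, mem_image_of_mem _ (mem_univ z)⟩
    · obtain ⟨z, rfl⟩ := hq y
      exact ⟨p z, mem_image_of_mem _ (mem_univ z)⟩

/-- `d_GH(M,N) = d_GH(VR(M), VR(N))`. -/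
theorem stmt_2 (M N : Type) [MetricSpace M] [MetricSpace N] [Fintype M] [Fintype N]
    [Nonempty M] [Nonempty N] :
    dGHmet M N = dGHtri (fdiam (M := M)) (fdiam (M := N)) :=
  stmt_2_general M N
end
end

section
/- The Gromov–Hausdorff distance between filtered simplicial complexes satisfies the triangle inequality: for filtered complexes X^*, X'^*, X''^* on finite vertex sets, d_GH(X^*, X''^*) ≤ d_GH(X^*, X'^*) + d_GH(X'^*, X''^*). -/
open Finset Function

noncomputable section
open scoped Classical

variable {V W U : Type} [Fintype V] [Fintype W] [Fintype U]

theorem supSub_nonneg (g : Finset V → ℝ) : 0 ≤ supSub g :=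
  (le_fold_max _).mpr (Or.inl le_rfl)

theorem le_supSub (g : Finset V → ℝ) {α : Finset V} (hα : α.Nonempty) : g α ≤ supSub g :=
  (le_fold_max _).mpr (Or.inr ⟨α, by simp [hα], le_rfl⟩)

theorem supSub_le {g : Finset V → ℝ} {B : ℝ} (hB : 0 ≤ B)
    (h : ∀ α : Finset V, α.Nonempty → g α ≤ B) : supSub g ≤ B :=
  (fold_max_le _).mpr ⟨hB, fun α hα => h α (mem_filter.mp hα).2⟩

theorem sInf_le_sInf_add_sInf {S T R : Set ℝ} (hS : S.Nonempty) (hS' : BddBelow S)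
    (hT : T.Nonempty) (hT' : BddBelow T) (hR : BddBelow R)
    (h : ∀ a ∈ S, ∀ b ∈ T, ∃ c ∈ R, c ≤ a + b) :
    sInf R ≤ sInf S + sInf T := by
  rw [← csInf_add hS hS' hT hT']
  refine le_csInf (hS.add hT) ?_
  rintro _ ⟨a, ha, b, hb, rfl⟩
  obtain ⟨c, hc, hle⟩ := h a ha b hb
  exact (csInf_le hR hc).trans hle

theorem Function.Pullback.fst_surjective {X Y Z : Type} {f : X → Y} {g : Z → Y}
    (hg : Surjective g) : Surjective (Pullback.fst : f.Pullback g → X) := fun x =>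
  let ⟨z, hz⟩ := hg (f x)
  ⟨⟨(x, z), hz.symm⟩, rfl⟩

theorem Function.Pullback.snd_surjective {X Y Z : Type} {f : X → Y} {g : Z → Y}
    (hf : Surjective f) : Surjective (Pullback.snd : f.Pullback g → Z) := fun z =>
  let ⟨x, hx⟩ := hf (g z)
  ⟨⟨(x, z), hx⟩, rfl⟩

def tripodDistortions {A B : Type} (DX : Finset A → ℝ) (DY : Finset B → ℝ) : Set ℝ :=
  { c : ℝ | ∃ (Z : Type) (_i : Fintype Z) (p : Z → A) (q : Z → B),
    Surjective p ∧ Surjective q ∧ c = trdis DX DY p q }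

theorem dGHtri_eq {A B : Type} (DX : Finset A → ℝ) (DY : Finset B → ℝ) :
    dGHtri DX DY = 1 / 2 * sInf (tripodDistortions DX DY) :=
  rfl

theorem tripodDistortions_nonempty {A B : Type} [Fintype A] [Fintype B]
    [Nonempty A] [Nonempty B] (DX : Finset A → ℝ) (DY : Finset B → ℝ) : (tripodDistortions DX DY).Nonempty :=
  ⟨_, A × B, inferInstance, Prod.fst, Prod.snd, Prod.fst_surjective, Prod.snd_surjective, rfl⟩

theorem tripodDistortions_bddBelow {A B : Type} (DX : Finset A → ℝ) (DY : Finset B → ℝ) :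
    BddBelow (tripodDistortions DX DY) := by
  refine ⟨0, ?_⟩
  rintro _ ⟨Z, _, p, q, -, -, rfl⟩
  exact supSub_nonneg _

/-- A subset of the fiber product has the same image in the middle complex through either
tripod, so the triangle inequality for `|·|` splits its distortion. -/
theorem trdis_pullback_le {A B C : Type}
    (DX : Finset A → ℝ) (DX' : Finset B → ℝ) (DX'' : Finset C → ℝ)
    {Z₁ Z₂ : Type} [Fintype Z₁] [Fintype Z₂]
    (p₁ : Z₁ → A) (q₁ : Z₁ → B) (p₂ : Z₂ → B) (q₂ : Z₂ → C) :
    trdis DX DX'' (p₁ ∘ Pullback.fst : q₁.Pullback p₂ → A) (q₂ ∘ Pullback.snd) ≤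
      trdis DX DX' p₁ q₁ + trdis DX' DX'' p₂ q₂ := by
  refine supSub_le (add_nonneg (supSub_nonneg _) (supSub_nonneg _)) fun α hα => ?_
  have hmid : (α.image Pullback.fst).image q₁ = (α.image Pullback.snd).image p₂ := by
    rw [image_image, image_image, pullback_comm_sq]
  calc |DX (α.image (p₁ ∘ Pullback.fst)) - DX'' (α.image (q₂ ∘ Pullback.snd))|
      ≤ |DX ((α.image Pullback.fst).image p₁) - DX' ((α.image Pullback.fst).image q₁)| +
          |DX' ((α.image Pullback.snd).image p₂) - DX'' ((α.image Pullback.snd).image q₂)| := by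
        rw [← hmid]
        simp only [image_image]
        exact abs_sub_le _ _ _
    _ ≤ trdis DX DX' p₁ q₁ + trdis DX' DX'' p₂ q₂ :=
        add_le_add (le_supSub (fun β => |DX (β.image p₁) - DX' (β.image q₁)|) (hα.image _))
          (le_supSub (fun γ => |DX' (γ.image p₂) - DX'' (γ.image q₂)|) (hα.image _))

theorem exists_mem_tripodDistortions_le_add {A B C : Type}
    (DX : Finset A → ℝ) (DX' : Finset B → ℝ) (DX'' : Finset C → ℝ) :
    ∀ a ∈ tripodDistortions DX DX', ∀ b ∈ tripodDistortions DX' DX'',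
      ∃ c ∈ tripodDistortions DX DX'', c ≤ a + b := by
  rintro _ ⟨Z₁, _, p₁, q₁, hp₁, hq₁, rfl⟩ _ ⟨Z₂, _, p₂, q₂, hp₂, hq₂, rfl⟩
  exact ⟨_, ⟨q₁.Pullback p₂, inferInstance, _, _,
    hp₁.comp (Pullback.fst_surjective hp₂), hq₂.comp (Pullback.snd_surjective hq₁), rfl⟩,
    trdis_pullback_le DX DX' DX'' p₁ q₁ p₂ q₂⟩

theorem stmt_3_general [Nonempty V] [Nonempty W] [Nonempty U]
    (DX : Finset V → ℝ) (DX' : Finset W → ℝ) (DX'' : Finset U → ℝ) :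
    dGHtri DX DX'' ≤ dGHtri DX DX' + dGHtri DX' DX'' := by
  rw [dGHtri_eq, dGHtri_eq, dGHtri_eq, ← mul_add]
  gcongr
  exact sInf_le_sInf_add_sInf (tripodDistortions_nonempty DX DX')
    (tripodDistortions_bddBelow DX DX') (tripodDistortions_nonempty DX' DX'')
    (tripodDistortions_bddBelow DX' DX'') (tripodDistortions_bddBelow DX DX'')
    (exists_mem_tripodDistortions_le_add DX DX' DX'')

/-- triangle inequality for the Gromov–Hausdorff distance between
filtered simplicial complexes. -/
theorem stmt_3 [Nonempty V] [Nonempty W] [Nonempty U]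
    (DX : Finset V → ℝ) (DX' : Finset W → ℝ) (DX'' : Finset U → ℝ)
    (hX : Monot DX) (hX' : Monot DX') (hX'' : Monot DX'') :
    dGHtri DX DX'' ≤ dGHtri DX DX' + dGHtri DX' DX'' :=
  stmt_3_general DX DX' DX''
end
end

section
/- The interleaving distance d_I^F between filtered simplicial complexes satisfies the triangle inequality: if X^* and Y^* are ε-interleaved and Y^* and Z^* are ε'-interleaved, then X^* and Z^* are (ε + ε')-interleaved. -/
open Finset Function

noncomputable section
open scoped Classical

variable {V W U : Type} [Fintype V] [Fintype W] [Fintype U]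

/-!
Composition adds degrees, so `f' ∘ f` and `g ∘ g'` have degree at most `ε + ε'`. For the
codegree condition, a chain from `g' ∘ f'` to `id` on `Y` is carried to `X` by applying
`g ∘ - ∘ f`, which raises each codegree by at most `2ε`; it ends at `g ∘ f`, from which a chain of
codegrees at most `2ε` leads to `id`. Concatenating gives a chain of codegrees at most
`2(ε + ε')` from `(g ∘ g') ∘ (f' ∘ f)` to `id`, and symmetrically on `Z`.
-/

section Interleaving

variable {A B C E : Type}
  {DA : Finset A → ℝ} {DB : Finset B → ℝ} {DC : Finset C → ℝ} {DE : Finset E → ℝ}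

lemma supSub_nonneg_s10 [Fintype A] (φ : Finset A → ℝ) : 0 ≤ supSub φ :=
  (le_fold_max _).2 (Or.inl le_rfl)

lemma supSub_le_iff [Fintype A] {φ : Finset A → ℝ} {r : ℝ} :
    supSub φ ≤ r ↔ 0 ≤ r ∧ ∀ α : Finset A, α.Nonempty → φ α ≤ r := by
  simp [supSub, fold_max_le]

lemma degF_nonneg [Fintype A] (DA : Finset A → ℝ) (DB : Finset B → ℝ) (f : A → B) :
    0 ≤ degF DA DB f :=
  supSub_nonneg_s10 _

lemma codegF_nonneg [Fintype A] (DA : Finset A → ℝ) (DB : Finset B → ℝ) (f g : A → B) :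
    0 ≤ codegF DA DB f g :=
  supSub_nonneg_s10 _

lemma degF_le_iff [Fintype A] {f : A → B} {r : ℝ} :
    degF DA DB f ≤ r ↔ 0 ≤ r ∧ ∀ α : Finset A, α.Nonempty → DB (α.image f) ≤ DA α + r := by
  simp only [degF, supSub_le_iff, sub_le_iff_le_add']

lemma codegF_le_iff [Fintype A] {f g : A → B} {r : ℝ} :
    codegF DA DB f g ≤ r ↔
      0 ≤ r ∧ ∀ α : Finset A, α.Nonempty → DB (α.image f ∪ α.image g) ≤ DA α + r := by
  simp only [codegF, supSub_le_iff, sub_le_iff_le_add']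

lemma degF_comp [Fintype A] [Fintype B] {f : A → B} {g : B → C} {a b : ℝ}
    (hf : degF DA DB f ≤ a) (hg : degF DB DC g ≤ b) : degF DA DC (g ∘ f) ≤ a + b := by
  rw [degF_le_iff] at hf hg ⊢
  refine ⟨add_nonneg hf.1 hg.1, fun α hα => ?_⟩
  rw [← image_image]
  linarith [hg.2 _ (hα.image f), hf.2 α hα]

lemma codegF_comp_right [Fintype A] [Fintype B] {u : A → B} {p q : B → C} {a c : ℝ}
    (hu : degF DA DB u ≤ a) (hpq : codegF DB DC p q ≤ c) :
    codegF DA DC (p ∘ u) (q ∘ u) ≤ a + c := by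
  rw [degF_le_iff] at hu
  rw [codegF_le_iff] at hpq ⊢
  refine ⟨add_nonneg hu.1 hpq.1, fun α hα => ?_⟩
  rw [← image_image, ← image_image]
  linarith [hpq.2 _ (hα.image u), hu.2 α hα]

lemma codegF_comp_left [Fintype B] [Fintype C] {p q : B → C} {v : C → E} {b c : ℝ}
    (hv : degF DC DE v ≤ b) (hpq : codegF DB DC p q ≤ c) :
    codegF DB DE (v ∘ p) (v ∘ q) ≤ c + b := by
  rw [degF_le_iff] at hv
  rw [codegF_le_iff] at hpq ⊢
  refine ⟨add_nonneg hpq.1 hv.1, fun α hα => ?_⟩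
  rw [← image_image, ← image_image, ← image_union]
  have hne : (α.image p ∪ α.image q).Nonempty := (hα.image p).mono subset_union_left
  linarith [hv.2 _ hne, hpq.2 α hα]

lemma codegInfF_le_of_chain [Fintype A] {f g : A → B} {r : ℝ} {n : ℕ} (hn : 0 < n)
    (F : ℕ → A → B) (hF0 : F 0 = f) (hFn : F n = g)
    (hF : ∀ i < n, codegF DA DB (F i) (F (i + 1)) ≤ r) :
    codegInfF DA DB f g ≤ r := by
  have hbdd : BddBelow {c : ℝ | ∃ n : ℕ, 0 < n ∧ ∃ F : ℕ → A → B, F 0 = f ∧ F n = g ∧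
      c = (range n).fold max 0 fun i => codegF DA DB (F i) (F (i + 1))} := by
    refine ⟨0, ?_⟩
    rintro c ⟨n, -, F, -, -, rfl⟩
    exact (le_fold_max _).2 (Or.inl le_rfl)
  refine (csInf_le hbdd ⟨n, hn, F, hF0, hFn, rfl⟩).trans ((fold_max_le _).2 ⟨?_, ?_⟩)
  · exact (codegF_nonneg _ _ _ _).trans (hF 0 hn)
  · exact fun i hi => hF i (mem_range.1 hi)

lemma exists_chain_of_codegInfF_lt [Fintype A] {f g : A → B} {r : ℝ}
    (h : codegInfF DA DB f g < r) :
    ∃ n, 0 < n ∧ ∃ F : ℕ → A → B, F 0 = f ∧ F n = g ∧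
      ∀ i < n, codegF DA DB (F i) (F (i + 1)) ≤ r := by
  have hne : {c : ℝ | ∃ n : ℕ, 0 < n ∧ ∃ F : ℕ → A → B, F 0 = f ∧ F n = g ∧
      c = (range n).fold max 0 fun i => codegF DA DB (F i) (F (i + 1))}.Nonempty :=
    ⟨_, 1, one_pos, fun i => if i = 0 then f else g, by simp, by simp, rfl⟩
  obtain ⟨c, ⟨n, hn, F, hF0, hFn, rfl⟩, hc⟩ := exists_lt_of_csInf_lt hne h
  exact ⟨n, hn, F, hF0, hFn, fun i hi =>
    ((le_fold_max _).2 (Or.inr ⟨i, mem_range.2 hi, le_rfl⟩)).trans hc.le⟩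

lemma codegInfF_trans [Fintype A] {f g h : A → B} {a b : ℝ}
    (hfg : codegInfF DA DB f g ≤ a) (hgh : codegInfF DA DB g h ≤ b) :
    codegInfF DA DB f h ≤ max a b := by
  refine le_of_forall_pos_le_add fun δ hδ => ?_
  obtain ⟨m, hm, F, hF0, hFm, hF⟩ :=
    exists_chain_of_codegInfF_lt (hfg.trans_lt (lt_add_of_pos_right a hδ))
  obtain ⟨n, hn, G, hG0, hGn, hG⟩ :=
    exists_chain_of_codegInfF_lt (hgh.trans_lt (lt_add_of_pos_right b hδ))
  have hbound : ∀ x, x ≤ a + δ ∨ x ≤ b + δ → x ≤ max a b + δ := by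
    rintro x (hx | hx) <;> linarith [le_max_left a b, le_max_right a b]
  refine codegInfF_le_of_chain (n := m + n) (by omega)
    (fun j => if j ≤ m then F j else G (j - m)) (by simp [hF0])
    (by simp [show ¬m + n ≤ m by omega, hGn]) ?_
  intro i hi
  by_cases him : i < m
  · simp only [if_pos him.le, if_pos (Nat.succ_le_of_lt him)]
    exact hbound _ (Or.inl (hF i him))
  · have hleft : (if i ≤ m then F i else G (i - m)) = G (i - m) := by
      split_ifs with h
      · rw [show i = m by omega, hFm, Nat.sub_self, hG0]
      · rfl
    simp only [hleft, if_neg (show ¬i + 1 ≤ m by omega), show i + 1 - m = i - m + 1 by omega]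
    exact hbound _ (Or.inr (hG (i - m) (by omega)))

lemma codegInfF_map_le [Fintype A] [Fintype B] (Φ : (B → C) → A → E) {k : ℝ}
    (hΦ : ∀ p q r, codegF DB DC p q ≤ r → codegF DA DE (Φ p) (Φ q) ≤ r + k)
    {p q : B → C} {c : ℝ} (hpq : codegInfF DB DC p q ≤ c) :
    codegInfF DA DE (Φ p) (Φ q) ≤ c + k := by
  refine le_of_forall_pos_le_add fun δ hδ => ?_
  obtain ⟨n, hn, F, hF0, hFn, hF⟩ :=
    exists_chain_of_codegInfF_lt (hpq.trans_lt (lt_add_of_pos_right c hδ))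
  refine codegInfF_le_of_chain hn (Φ ∘ F) (by simp [hF0]) (by simp [hFn]) fun i hi => ?_
  simpa only [comp_apply, add_right_comm] using hΦ _ _ _ (hF i hi)

lemma codegInfF_comp_comp_le [Fintype A] [Fintype B] [Fintype C]
    {u : A → B} {p q : B → C} {v : C → E} {a b c : ℝ}
    (hu : degF DA DB u ≤ a) (hv : degF DC DE v ≤ b) (hpq : codegInfF DB DC p q ≤ c) :
    codegInfF DA DE (v ∘ p ∘ u) (v ∘ q ∘ u) ≤ a + b + c := by
  have hΦ : ∀ p q r, codegF DB DC p q ≤ r →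
      codegF DA DE (v ∘ p ∘ u) (v ∘ q ∘ u) ≤ r + (a + b) := fun p q r h => by
    linarith [codegF_comp_left hv (codegF_comp_right hu h)]
  linarith [codegInfF_map_le (fun p => v ∘ p ∘ u) hΦ hpq]

lemma codegInfF_comp_comp_id_le [Fintype A] [Fintype B]
    {u : A → B} {v : B → A} {h : B → B} {a b c d : ℝ}
    (hu : degF DA DB u ≤ a) (hv : degF DB DA v ≤ b)
    (hh : codegInfF DB DB h id ≤ c) (hvu : codegInfF DA DA (v ∘ u) id ≤ d) :
    codegInfF DA DA (v ∘ h ∘ u) id ≤ max (a + b + c) d :=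
  codegInfF_trans (codegInfF_comp_comp_le hu hv hh) hvu

end Interleaving

theorem stmt_10_general (DX : Finset V → ℝ) (DY : Finset W → ℝ) (DZ : Finset U → ℝ)
    (ε ε' : ℝ) (f : V → W) (g : W → V) (f' : W → U) (g' : U → W)
    (h1 : IsInterleaving DX DY f g ε) (h2 : IsInterleaving DY DZ f' g' ε') :
    ∃ (F : V → U) (G : U → V), IsInterleaving DX DZ F G (ε + ε') := by
  obtain ⟨hf, hg, hgf, hfg⟩ := h1
  obtain ⟨hf', hg', hgf', hfg'⟩ := h2
  have hε := (degF_nonneg _ _ _).trans hf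
  have hε' := (degF_nonneg _ _ _).trans hf'
  refine ⟨f' ∘ f, g ∘ g', degF_comp hf hf', add_comm ε' ε ▸ degF_comp hg' hg, ?_, ?_⟩
  · calc codegInfF DX DX (g ∘ (g' ∘ f') ∘ f) id ≤ max (ε + ε + 2 * ε') (2 * ε) :=
          codegInfF_comp_comp_id_le hf hg hgf' hgf
      _ ≤ 2 * (ε + ε') := max_le (by linarith) (by linarith)
  · calc codegInfF DZ DZ (f' ∘ (f ∘ g) ∘ g') id ≤ max (ε' + ε' + 2 * ε) (2 * ε') :=
          codegInfF_comp_comp_id_le hg' hf' hfg hfg'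
      _ ≤ 2 * (ε + ε') := max_le (by linarith) (by linarith)

/-- triangle inequality for `d_I^F`: if `X^*, Y^*` are `ε`-interleaved and
`Y^*, Z^*` are `ε'`-interleaved, then `X^*, Z^*` are `(ε + ε')`-interleaved. -/
theorem stmt_10 (DX : Finset V → ℝ) (DY : Finset W → ℝ) (DZ : Finset U → ℝ)
    (hX : Monot DX) (hY : Monot DY) (hZ : Monot DZ)
    (ε ε' : ℝ) (f : V → W) (g : W → V) (f' : W → U) (g' : U → W)
    (h1 : IsInterleaving DX DY f g ε) (h2 : IsInterleaving DY DZ f' g' ε') :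
    ∃ (F : V → U) (G : U → V), IsInterleaving DX DZ F G (ε + ε') :=
  stmt_10_general DX DY DZ ε ε' f g f' g' h1 h2
end
end
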